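/- Let μ be any Möbius function for 𝒢. If G is a bipartite finite simple graph with at least one edge and |G| > 2, then μ(K_1, G) = −μ(K_2, G). -/

import Mathlib

/-!
Put `f X = μ(K₁, X) + μ(K₂, X)`; we show `f G = 0` for every triangle-free `G` with an edge, by
strong induction on `|G|`. If `G ≅ K₂` this is `μ(K₁, K₂) = -1`. Otherwise `G` has two
non-adjacent vertices. In a transversal `T` of `[K₁, G]`, the members without an edge are the
edgeless graphs of orders `1, …, α(G)` with `α(G) ≥ 2`, so they form a transversal of `[K₁, E_α]`
and their `μ(K₁, ·)` sum to `0`; as `Σ_T μ(K₁, ·) = 0`, the members containing `K₂` also have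
`Σ μ(K₁, ·) = 0`. These members form a transversal of `[K₂, G]`, so `Σ f = 0` over them, and by
induction every term but the one isomorphic to `G` vanishes.
-/

open SimpleGraph

/-- A finite simple graph, encoded by its number of vertices together with a
simple graph structure on `Fin n`. -/
def FinGraph : Type := Σ n : ℕ, SimpleGraph (Fin n)

namespace FinGraph

/-- The number of vertices of a graph. -/
def order (G : FinGraph) : ℕ := G.1

/-- Induced containment `H ⊴ G`: there is an injection of the vertices of `H`
into the vertices of `G` which preserves and reflects adjacency (equivalently,
`H` is isomorphic to an induced subgraph of `G`). -/
def Contains (H G : FinGraph) : Prop :=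
  ∃ f : Fin H.1 ↪ Fin G.1, ∀ a b : Fin H.1, G.2.Adj (f a) (f b) ↔ H.2.Adj a b

/-- Isomorphism of finite graphs. -/
def Iso (H G : FinGraph) : Prop := Nonempty (H.2 ≃g G.2)

/-- Package a simple graph on an arbitrary finite vertex type as a `FinGraph`. -/
noncomputable def of {V : Type} [Fintype V] (G : SimpleGraph V) : FinGraph :=
  ⟨Fintype.card V, G.comap ⇑(Fintype.equivFin V).symm⟩

end FinGraph

/-- `T` is a transversal of the interval `[H,G]`: every member lies in `[H,G]`,
distinct members are non-isomorphic, and every graph in `[H,G]` is isomorphic to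
a member of `T`. -/
def IsTransversal (H G : FinGraph) (T : Finset FinGraph) : Prop :=
  (∀ X ∈ T, H.Contains X ∧ X.Contains G) ∧
  (∀ X ∈ T, ∀ Y ∈ T, X ≠ Y → ¬ X.Iso Y) ∧
  (∀ X : FinGraph, H.Contains X → X.Contains G → ∃ Y ∈ T, X.Iso Y)

/-- `mu` is a Möbius function for the poset `𝒢` of all finite simple graphs up to
isomorphism, ordered by induced containment: it is isomorphism invariant, vanishes
on non-comparable pairs, and for every `H ⊴ G` the sum of `mu H ·` over any
transversal of `[H,G]` is `1` if `H ≅ G` and `0` otherwise. -/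
def IsMobius (mu : FinGraph → FinGraph → ℤ) : Prop :=
  (∀ H H' G G' : FinGraph, H.Iso H' → G.Iso G' → mu H G = mu H' G') ∧
  (∀ H G : FinGraph, ¬ H.Contains G → mu H G = 0) ∧
  (∀ H G : FinGraph, H.Contains G → ∀ T : Finset FinGraph, IsTransversal H G T →
    (H.Iso G → ∑ X ∈ T, mu H X = 1) ∧ (¬ H.Iso G → ∑ X ∈ T, mu H X = 0))

theorem SimpleGraph.CliqueFree.ne_top {V : Type*} [Fintype V] {G : SimpleGraph V} {n : ℕ}
    (h : G.CliqueFree n) (hn : n ≤ Fintype.card V) : G ≠ ⊤ := by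
  rintro rfl
  obtain ⟨f⟩ := Function.Embedding.nonempty_of_card_le (α := Fin n) (β := V) (by simpa)
  exact (isContained_top_iff.2 ⟨f⟩).not_cliqueFree h

namespace FinGraph

variable {H G X Y : FinGraph}

theorem contains_iff_isIndContained : H.Contains G ↔ H.2 ⊴ G.2 :=
  ⟨fun ⟨f, hf⟩ => ⟨⟨f, hf _ _⟩⟩, fun ⟨f⟩ => ⟨f.toEmbedding, fun _ _ => f.map_rel_iff⟩⟩

theorem Contains.refl (G : FinGraph) : G.Contains G :=
  contains_iff_isIndContained.2 .rfl

theorem Contains.trans (h : H.Contains X) (h' : X.Contains G) : H.Contains G :=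
  contains_iff_isIndContained.2 <|
    (contains_iff_isIndContained.1 h).trans (contains_iff_isIndContained.1 h')

theorem Contains.order_le (h : H.Contains G) : H.order ≤ G.order := by
  obtain ⟨f, -⟩ := h
  simpa [order] using Fintype.card_le_of_embedding f

theorem Contains.cliqueFree {n : ℕ} (h : H.Contains G) (hG : G.2.CliqueFree n) :
    H.2.CliqueFree n :=
  hG.comap (contains_iff_isIndContained.1 h).isContained

theorem Iso.refl (G : FinGraph) : G.Iso G := ⟨.refl⟩

theorem Iso.symm (h : H.Iso G) : G.Iso H := ⟨h.some.symm⟩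

theorem Iso.trans (h : H.Iso X) (h' : X.Iso G) : H.Iso G := ⟨h.some.trans h'.some⟩

theorem Iso.contains (h : H.Iso G) : H.Contains G :=
  contains_iff_isIndContained.2 h.some.isIndContained

theorem Iso.order_eq (h : H.Iso G) : H.order = G.order :=
  le_antisymm h.contains.order_le h.symm.contains.order_le

theorem Contains.iso_of_order_eq (h : H.Contains G) (h' : H.order = G.order) : H.Iso G := by
  obtain ⟨f, hf⟩ := h
  have hbij : Function.Bijective f :=
    (Fintype.bijective_iff_injective_and_card f).2 ⟨f.injective, by simpa [order] using h'⟩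
  exact ⟨⟨Equiv.ofBijective f hbij, hf _ _⟩⟩

theorem Contains.order_lt_of_not_iso (h : H.Contains G) (h' : ¬H.Iso G) :
    H.order < G.order :=
  h.order_le.lt_of_ne (mt h.iso_of_order_eq h')

theorem Contains.iso_of_contains (h : H.Contains G) (h' : G.Contains H) : H.Iso G :=
  h.iso_of_order_eq (le_antisymm h.order_le h'.order_le)

theorem finite_setOf_contains (G : FinGraph) : {X : FinGraph | X.Contains G}.Finite := by
  refine (Set.finite_range fun p : Σ n : Fin (G.order + 1), SimpleGraph (Fin n) =>
    (⟨p.1, p.2⟩ : FinGraph)).subset ?_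
  rintro ⟨n, X⟩ h
  exact ⟨⟨⟨n, Nat.lt_succ_of_le h.order_le⟩, X⟩, rfl⟩

instance isoSetoid : Setoid FinGraph := ⟨Iso, ⟨Iso.refl, Iso.symm, Iso.trans⟩⟩

abbrev K1 : FinGraph := ⟨1, ⊥⟩

abbrev K2 : FinGraph := ⟨2, ⊤⟩

def edgeless (n : ℕ) : FinGraph := ⟨n, ⊥⟩

theorem K1_contains (h : 0 < G.order) : K1.Contains G :=
  ⟨⟨fun _ => ⟨0, h⟩, fun a b _ => Subsingleton.elim a b⟩,
    fun _ _ => iff_of_false (G.2.irrefl (v := ⟨0, h⟩)) (bot_adj _ _).1⟩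

theorem K2_contains_iff : K2.Contains G ↔ G.2 ≠ ⊥ := by
  rw [contains_iff_isIndContained, Ne, ← cliqueFree_two, not_cliqueFree_iff_top_isContained]
  exact top_isIndContained_iff_top_isContained

theorem edgeless_two_contains_iff : (edgeless 2).Contains G ↔ G.2 ≠ ⊤ := by
  rw [contains_iff_isIndContained, ← compl_isIndContained_compl, edgeless, compl_bot,
    Ne, ← compl_eq_bot, ← cliqueFree_two, not_cliqueFree_iff_top_isContained]
  exact top_isIndContained_iff_top_isContained

theorem contains_of_not_K2_contains (hX : ¬K2.Contains X) (hY : ¬K2.Contains Y)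
    (h : X.order ≤ Y.order) : X.Contains Y := by
  rw [K2_contains_iff, not_not] at hX hY
  rw [contains_iff_isIndContained, hX, hY, ← compl_isIndContained_compl, compl_bot, compl_bot]
  exact top_isIndContained_top_iff.2 ⟨Fin.castLEEmb h⟩

end FinGraph

open FinGraph

section

open scoped Classical

variable {H G K M : FinGraph} {T : Finset FinGraph}

theorem exists_isTransversal (H G : FinGraph) : ∃ T, IsTransversal H G T := by
  have hfin : {X | H.Contains X ∧ X.Contains G}.Finite :=
    (finite_setOf_contains G).subset fun _ hX => hX.2
  have hrep (X : FinGraph) : (⟦X⟧ : Quotient isoSetoid).out.Iso X := Quotient.mk_out X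
  refine ⟨hfin.toFinset.image fun X => (⟦X⟧ : Quotient isoSetoid).out, ?_, ?_, ?_⟩
  · simp only [Finset.mem_image, Set.Finite.mem_toFinset]
    rintro _ ⟨X, ⟨hHX, hXG⟩, rfl⟩
    exact ⟨hHX.trans (hrep X).symm.contains, (hrep X).contains.trans hXG⟩
  · simp only [Finset.mem_image, Set.Finite.mem_toFinset]
    rintro _ ⟨X, -, rfl⟩ _ ⟨Y, -, rfl⟩ hne e
    exact hne (congrArg Quotient.out (Quotient.sound ((hrep X).symm.trans (e.trans (hrep Y)))))
  · intro X hHX hXG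
    exact ⟨_, Finset.mem_image_of_mem _ (hfin.mem_toFinset.2 ⟨hHX, hXG⟩), (hrep X).symm⟩

theorem isTransversal_singleton (G : FinGraph) : IsTransversal G G {G} := by
  refine ⟨?_, ?_, fun X hGX hXG => ⟨G, Finset.mem_singleton_self G, hXG.iso_of_contains hGX⟩⟩
  · intro X hX
    rw [Finset.mem_singleton.1 hX]
    exact ⟨.refl G, .refl G⟩
  · intro X hX Y hY hne
    exact absurd ((Finset.mem_singleton.1 hX).trans (Finset.mem_singleton.1 hY).symm) hne

theorem isTransversal_K1_K2 : IsTransversal K1 K2 {K1, K2} := by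
  refine ⟨?_, ?_, fun X h1 h2 => ?_⟩
  · simp only [Finset.mem_insert, Finset.mem_singleton]
    rintro _ (rfl | rfl)
    exacts [⟨.refl K1, K1_contains two_pos⟩, ⟨K1_contains two_pos, .refl K2⟩]
  · simp only [Finset.mem_insert, Finset.mem_singleton]
    rintro _ (rfl | rfl) _ (rfl | rfl) hne e <;>
      first | exact hne rfl | exact absurd e.order_eq (by decide)
  · rcases h1.order_le.eq_or_lt with h | h
    · exact ⟨K1, by simp, (h1.iso_of_order_eq h).symm⟩
    · exact ⟨K2, by simp, h2.iso_of_order_eq (le_antisymm h2.order_le h)⟩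

theorem IsTransversal.filter_contains (hT : IsTransversal H G T) (hHK : H.Contains K) :
    IsTransversal K G (T.filter K.Contains) := by
  refine ⟨fun X hX => ?_, fun X hX Y hY => hT.2.1 X (Finset.mem_filter.1 hX).1 Y
    (Finset.mem_filter.1 hY).1, fun X hKX hXG => ?_⟩
  · rw [Finset.mem_filter] at hX
    exact ⟨hX.2, (hT.1 X hX.1).2⟩
  · obtain ⟨Y, hY, e⟩ := hT.2.2 X (hHK.trans hKX) hXG
    exact ⟨Y, Finset.mem_filter.2 ⟨hY, hKX.trans e.contains⟩, e⟩

theorem IsTransversal.filter_not_K2_contains (hT : IsTransversal H G T) (hM : M ∈ T)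
    (hMK2 : ¬K2.Contains M) (hmax : ∀ X ∈ T, ¬K2.Contains X → X.order ≤ M.order) :
    IsTransversal H M (T.filter (¬K2.Contains ·)) := by
  refine ⟨fun X hX => ?_, fun X hX Y hY => hT.2.1 X (Finset.mem_filter.1 hX).1 Y
    (Finset.mem_filter.1 hY).1, fun X hHX hXM => ?_⟩
  · rw [Finset.mem_filter] at hX
    exact ⟨(hT.1 X hX.1).1, contains_of_not_K2_contains hX.2 hMK2 (hmax X hX.1 hX.2)⟩
  · obtain ⟨Y, hY, e⟩ := hT.2.2 X hHX (hXM.trans (hT.1 M hM).2)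
    exact ⟨Y, Finset.mem_filter.2 ⟨hY, fun h => hMK2 (h.trans (e.symm.contains.trans hXM))⟩, e⟩

variable {mu : FinGraph → FinGraph → ℤ}

theorem IsMobius.congr_right (hmu : IsMobius mu) (h : G.Iso K) : mu H G = mu H K :=
  hmu.1 H H G K (.refl H) h

theorem IsMobius.sum_eq_zero (hmu : IsMobius mu) (hHG : H.Contains G) (hne : ¬H.Iso G)
    (hT : IsTransversal H G T) : ∑ X ∈ T, mu H X = 0 :=
  (hmu.2.2 H G hHG T hT).2 hne

theorem IsMobius.apply_self (hmu : IsMobius mu) (G : FinGraph) : mu G G = 1 := by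
  simpa using (hmu.2.2 G G (.refl G) {G} (isTransversal_singleton G)).1 (.refl G)

theorem IsMobius.apply_K1_K2 (hmu : IsMobius mu) : mu K1 K2 = -1 := by
  have h := hmu.sum_eq_zero (K1_contains two_pos) (fun e => absurd e.order_eq (by decide))
    isTransversal_K1_K2
  rw [Finset.sum_pair fun h => absurd (congrArg order h) (by decide), hmu.apply_self] at h
  omega

theorem IsMobius.sum_filter_not_K2_contains_eq_zero (hmu : IsMobius mu)
    (hT : IsTransversal K1 G T) (hG : (edgeless 2).Contains G) :
    ∑ X ∈ T.filter (¬K2.Contains ·), mu K1 X = 0 := by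
  obtain ⟨Y, hY, e⟩ := hT.2.2 (edgeless 2) (K1_contains two_pos) hG
  have hY' : Y ∈ T.filter (¬K2.Contains ·) :=
    Finset.mem_filter.2 ⟨hY, fun h => K2_contains_iff.1 (h.trans e.symm.contains) rfl⟩
  obtain ⟨M, hM, hmax⟩ := (T.filter (¬K2.Contains ·)).exists_max_image order ⟨Y, hY'⟩
  rw [Finset.mem_filter] at hM
  refine hmu.sum_eq_zero (hT.1 M hM.1).1 (fun e' => ?_) (hT.filter_not_K2_contains hM.1 hM.2
    fun X hX hXK2 => hmax X (Finset.mem_filter.2 ⟨hX, hXK2⟩))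
  have hM1 : 1 = M.order := e'.order_eq
  have hY2 : 2 = Y.order := e.order_eq
  have := hmax Y hY'
  omega

theorem IsMobius.sum_filter_K2_contains_add_eq_zero (hmu : IsMobius mu)
    (hT : IsTransversal K1 G T) (hK2G : K2.Contains G) (hG : (edgeless 2).Contains G) :
    ∑ X ∈ T.filter K2.Contains, (mu K1 X + mu K2 X) = 0 := by
  have hK1 : ¬K1.Iso G := fun e => by
    have h1 : 1 = G.order := e.order_eq
    have h2 : 2 ≤ G.order := hG.order_le
    omega
  have hK2 : ¬K2.Iso G := fun e =>
    edgeless_two_contains_iff.1 (hG.trans e.symm.contains) rfl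
  have hsplit := Finset.sum_filter_add_sum_filter_not T K2.Contains (mu K1)
  rw [hmu.sum_eq_zero ((K1_contains two_pos).trans hK2G) hK1 hT,
    hmu.sum_filter_not_K2_contains_eq_zero hT hG, add_zero] at hsplit
  rw [Finset.sum_add_distrib, hsplit,
    hmu.sum_eq_zero hK2G hK2 (hT.filter_contains (K1_contains two_pos)), add_zero]

theorem IsMobius.apply_K1_add_apply_K2_eq_zero (hmu : IsMobius mu) (htf : G.2.CliqueFree 3)
    (hK2G : K2.Contains G) : mu K1 G + mu K2 G = 0 := by
  induction hn : G.order using Nat.strong_induction_on generalizing G with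
  | _ n ih =>
  subst hn
  rcases hK2G.order_le.eq_or_lt with h2 | h2
  · have e := hK2G.iso_of_order_eq h2
    rw [← hmu.congr_right e, ← hmu.congr_right e, hmu.apply_K1_K2, hmu.apply_self]
    norm_num
  obtain ⟨T, hT⟩ := exists_isTransversal K1 G
  obtain ⟨Y, hY, e⟩ := (hT.filter_contains (K1_contains two_pos)).2.2 G hK2G (.refl G)
  have hG : (edgeless 2).Contains G :=
    edgeless_two_contains_iff.2 (CliqueFree.ne_top htf (by rw [Fintype.card_fin]; exact h2))
  have hsum := hmu.sum_filter_K2_contains_add_eq_zero hT hK2G hG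
  rw [Finset.sum_eq_single_of_mem Y hY ?_] at hsum
  · rwa [hmu.congr_right e, hmu.congr_right e]
  intro X hX hXY
  rw [Finset.mem_filter] at hX
  have hXG := (hT.1 X hX.1).2
  refine ih X.order (hXG.order_lt_of_not_iso fun e' => ?_) (hXG.cliqueFree htf) hX.2 rfl
  exact hT.2.1 X hX.1 Y (Finset.mem_filter.1 hY).1 hXY (e'.trans e)

end

theorem mobius_K1_eq_neg_mobius_K2_general (mu : FinGraph → FinGraph → ℤ)
    (hmu : IsMobius mu) (G : FinGraph) (hbip : G.2.Colorable 2)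
    (hedge : ∃ u v : Fin G.1, G.2.Adj u v) :
    mu ⟨1, (⊥ : SimpleGraph (Fin 1))⟩ G = - mu ⟨2, (⊤ : SimpleGraph (Fin 2))⟩ G :=
  eq_neg_of_add_eq_zero_left <| hmu.apply_K1_add_apply_K2_eq_zero
    (hbip.cliqueFree (by norm_num)) (K2_contains_iff.2 (ne_bot_iff_exists_adj.2 hedge))

/-- If `G` is bipartite with at least one edge and `|G| > 2`, then
`μ(K_1,G) = -μ(K_2,G)`. -/
theorem mobius_K1_eq_neg_mobius_K2 (mu : FinGraph → FinGraph → ℤ)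
    (hmu : IsMobius mu) (G : FinGraph) (hbip : G.2.Colorable 2)
    (hedge : ∃ u v : Fin G.1, G.2.Adj u v) (hcard : 2 < G.order) :
    mu ⟨1, (⊥ : SimpleGraph (Fin 1))⟩ G = - mu ⟨2, (⊤ : SimpleGraph (Fin 2))⟩ G :=
  mobius_K1_eq_neg_mobius_K2_general mu hmu G hbip hedge
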